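/- Let t_n be the coefficients of G(T) = T·e^T/(e^T − 1) = Σ_n t_n T^n. Then for all natural numbers m, p, q with m = p + q: C(m,p)·t_m = Σ_{n+r=m+1, p ≤ n−1} C(n,p)·t_n·t_r + Σ_{n+r=m+1, q ≤ r−1} C(r,q)·t_n·t_r, where C(·,·) denotes binomial coefficients. -/

import Mathlib

/-- The generating series `G(T) = T·e^T/(e^T − 1) = e^T · ((e^T − 1)/T)⁻¹ ∈ ℚ[[T]]`. -/
noncomputable def bernG : PowerSeries ℚ :=
  PowerSeries.exp ℚ * (PowerSeries.mk fun n => (1 : ℚ) / (n + 1).factorial)⁻¹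

/-- The coefficients `t_n` of `G(T) = Σ_n t_n T^n`. -/
noncomputable def tcoef (n : ℕ) : ℚ := PowerSeries.coeff (R := ℚ) n bernG

/-!
Clearing denominators in `G(T) (e^T - 1) = T e^T` for `T = x`, `T = y` and `T = x + y` gives
`(x + y) G(x) G(y) = G(x + y) (y G(x) + x G(y) - x y)`, where `G(x + y)` is the bivariate series
with coefficients `C(j + k, k) t_{j+k}`. Comparing coefficients of `x^{p+1} y^{q+1}`, the right side
yields the two binomial convolutions; their terms `n = p` and `r = q` are exactly the left side
`t_p t_{q+1} + t_{p+1} t_q`, and what remains is the identity.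
-/

open PowerSeries

namespace Finset.Nat

variable {M : Type*} [AddCommMonoid M]

theorem sum_antidiagonal_add_add_eq (F : ℕ × ℕ → M) {a b : ℕ}
    (hF : ∀ x : ℕ × ℕ, x.1 < a ∨ x.2 < b → F x = 0) (n : ℕ) :
    ∑ x ∈ antidiagonal (n + a + b), F x = ∑ z ∈ antidiagonal n, F (z.1 + a, z.2 + b) := by
  refine (sum_of_injOn (fun z : ℕ × ℕ => (z.1 + a, z.2 + b)) ?_ ?_ ?_ fun _ _ => rfl).symm
  · intro z _ w _ h
    simp only [Prod.mk.injEq] at h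
    exact Prod.ext (by omega) (by omega)
  · intro z hz
    simp only [mem_coe, HasAntidiagonal.mem_antidiagonal] at hz ⊢
    omega
  · intro x hx hxn
    refine hF x ?_
    by_contra! hab
    refine hxn ⟨(x.1 - a, x.2 - b), ?_, Prod.ext (by simp; omega) (by simp; omega)⟩
    simp only [mem_coe, HasAntidiagonal.mem_antidiagonal] at hx ⊢
    omega

theorem sum_antidiagonal_succ_eq_add_sum_filter (f : ℕ → ℕ → M) {p q m : ℕ} (h : m = p + q) :
    ∑ x ∈ antidiagonal (q + 1), f (p + x.1) x.2 =
      f p (q + 1) + ∑ n ∈ (range (m + 2)).filter (fun n => p + 1 ≤ n), f n (m + 1 - n) := by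
  rw [sum_antidiagonal_succ, add_zero]
  congr 1
  refine sum_nbij' (fun x => p + 1 + x.1) (fun n => (n - (p + 1), m + 1 - n)) ?_ ?_ ?_ ?_ ?_
  · intro x hx
    simp only [HasAntidiagonal.mem_antidiagonal] at hx
    simp only [mem_filter, mem_range]
    omega
  · intro n hn
    simp only [mem_filter, mem_range] at hn
    simp only [HasAntidiagonal.mem_antidiagonal]
    omega
  · intro x hx
    simp only [HasAntidiagonal.mem_antidiagonal] at hx
    exact Prod.ext (by simp) (by simp; omega)
  · intro n hn
    simp only [mem_filter, mem_range] at hn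
    simp only
    omega
  · intro x hx
    simp only [HasAntidiagonal.mem_antidiagonal] at hx
    congr 1 <;> omega

end Finset.Nat

namespace PowerSeries

variable {R : Type*} [CommSemiring R]

open Finset in
/-- The substitution `f(X) ↦ f(x + y)` into `R⟦x⟧⟦y⟧ = R⟦X⟧⟦X⟧`, with `x = C X` the inner and
`y = X` the outer variable. -/
noncomputable def compAdd : R⟦X⟧ →+* R⟦X⟧⟦X⟧ where
  toFun f := mk fun k => mk fun j => (j + k).choose k * coeff (j + k) f
  map_one' := by
    ext k j
    rcases k with _ | k <;> rcases j with _ | j <;> simp [coeff_one]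
  map_mul' f g := by
    ext k j
    simp only [coeff_mk, coeff_mul, map_sum, mul_sum]
    have vandermonde : ∀ x ∈ antidiagonal (j + k), ((j + k).choose k : R) * (coeff x.1 f * coeff x.2 g)
        = ∑ y ∈ antidiagonal k, (x.1.choose y.1 * coeff x.1 f) * (x.2.choose y.2 * coeff x.2 g) := by
      intro x hx
      rw [← HasAntidiagonal.mem_antidiagonal.mp hx, Nat.add_choose_eq, Nat.cast_sum, sum_mul]
      refine sum_congr rfl fun y _ => ?_
      push_cast; ring
    rw [sum_congr rfl vandermonde, sum_comm]
    refine sum_congr rfl fun y hy => ?_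
    rw [← HasAntidiagonal.mem_antidiagonal.mp hy, ← add_assoc,
      Finset.Nat.sum_antidiagonal_add_add_eq]
    rintro x (hx | hx) <;> simp [Nat.choose_eq_zero_of_lt hx]
  map_zero' := by ext; simp
  map_add' f g := by ext; simp [mul_add]

theorem coeff_coeff_compAdd (f : R⟦X⟧) (j k : ℕ) :
    coeff j (coeff k (compAdd f)) = (j + k).choose k * coeff (j + k) f := by
  simp [compAdd]

theorem constantCoeff_compAdd (f : R⟦X⟧) : constantCoeff (compAdd f) = f := by
  ext j
  rw [← coeff_zero_eq_constantCoeff_apply, coeff_coeff_compAdd]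
  simp

theorem compAdd_injective : Function.Injective (compAdd (R := R)) :=
  Function.LeftInverse.injective constantCoeff_compAdd

theorem compAdd_X : compAdd (X : R⟦X⟧) = C X + X := by
  ext k j
  rw [coeff_coeff_compAdd, coeff_X, map_add, map_add, coeff_C, coeff_X]
  rcases k with _ | _ | k <;> rcases j with _ | _ | j <;> simp [coeff_X]
  omega

theorem coeff_coeff_C_mul_map_C (f g : R⟦X⟧) (j k : ℕ) :
    coeff j (coeff k (C f * map C g)) = coeff j f * coeff k g := by
  rw [coeff_C_mul, coeff_map, coeff_mul_C]

theorem exp_sub_one_ne_zero (A : Type*) [Ring A] [Algebra ℚ A] [Nontrivial A] :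
    exp A - 1 ≠ 0 := fun h => by
  simpa [coeff_one] using congrArg (coeff 1) h

theorem compAdd_exp {A : Type*} [CommRing A] [Algebra ℚ A] :
    compAdd (exp A) = C (exp A) * map C (exp A) := by
  ext k j
  rw [coeff_coeff_compAdd, coeff_coeff_C_mul_map_C, coeff_exp, coeff_exp, coeff_exp,
    ← map_natCast (algebraMap ℚ A), ← map_mul, ← map_mul, ← Nat.choose_symm_add,
    Nat.cast_add_choose]
  congr 1
  field_simp

end PowerSeries

theorem bernG_mul_exp_sub_one : bernG * (exp ℚ - 1) = X * exp ℚ := by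
  set E : ℚ⟦X⟧ := mk fun n => 1 / ((n + 1).factorial : ℚ)
  have exp_sub_one : exp ℚ - 1 = X * E := by
    ext (_ | n)
    · simp
    · simp [E, coeff_exp, coeff_succ_X_mul, Nat.factorial_succ]
  have hE : E⁻¹ * E = 1 := PowerSeries.inv_mul_cancel _ (by simp [E])
  calc bernG * (exp ℚ - 1) = X * exp ℚ * (E⁻¹ * E) := by rw [bernG, exp_sub_one]; ring
    _ = X * exp ℚ := by rw [hE, mul_one]

theorem bernG_functional_equation :
    (C X + X) * (C bernG * map C bernG) + C X * X * compAdd bernG =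
      X * (compAdd bernG * C bernG) + C X * (compAdd bernG * map C bernG) := by
  have hx := congrArg C bernG_mul_exp_sub_one
  have hy := congrArg (map C) bernG_mul_exp_sub_one
  have hxy := congrArg compAdd bernG_mul_exp_sub_one
  simp only [map_mul, map_sub, map_one, map_X, compAdd_X, compAdd_exp] at hx hy hxy
  have hE := exp_sub_one_ne_zero ℚ
  have hD : C (exp ℚ - 1) * map C (exp ℚ - 1) * compAdd (exp ℚ - 1) ≠ 0 :=
    mul_ne_zero (mul_ne_zero ((map_ne_zero_iff _ C_injective).mpr hE)
      ((map_ne_zero_iff _ (map_injective C C_injective)).mpr hE))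
      ((map_ne_zero_iff _ compAdd_injective).mpr hE)
  simp only [map_sub, map_one, compAdd_exp] at hD
  apply mul_right_cancel₀ hD
  set a := C (exp ℚ)
  set b := map C (exp ℚ)
  set x : ℚ⟦X⟧⟦X⟧ := C X
  linear_combination
    ((x + X) * (a * b - 1) * map C bernG * (b - 1) - (x + X) * a * b * X * (b - 1)) * hx
      + ((x + X) * (a * b - 1) * x * a - (x + X) * a * b * x * (a - 1)) * hy
      - (X * C bernG + x * map C bernG - x * X) * (a - 1) * (b - 1) * hxy

open Finset in
theorem bernG_functional_equation_coeff (p q : ℕ) :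
    tcoef p * tcoef (q + 1) + tcoef (p + 1) * tcoef q + (p + q).choose q * tcoef (p + q) =
      ∑ x ∈ antidiagonal (p + 1), ((q + x.1).choose q : ℚ) * tcoef x.2 * tcoef (q + x.1) +
        ∑ x ∈ antidiagonal (q + 1), ((p + x.1).choose p : ℚ) * tcoef (p + x.1) * tcoef x.2 := by
  have h := congrArg (fun F => coeff (p + 1) (coeff (q + 1) F)) bernG_functional_equation
  simp only [add_mul, mul_assoc, map_add, coeff_C_mul, coeff_succ_X_mul, coeff_coeff_compAdd,
    coeff_mul_C, coeff_map] at h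
  rw [coeff_mul, coeff_mul, map_sum] at h
  simp only [coeff_mul_C, coeff_map, coeff_coeff_compAdd] at h
  simp only [tcoef]
  rw [h]
  congr 1 <;> refine sum_congr rfl fun x _ => ?_
  · rw [add_comm x.1 q]
    ring
  · rw [Nat.choose_symm_add]

/-- for `m = p + q`,
`C(m,p)·t_m = Σ_{n+r=m+1, p ≤ n−1} C(n,p)·t_n·t_r + Σ_{n+r=m+1, q ≤ r−1} C(r,q)·t_n·t_r`. -/
theorem stmt16 (m p q : ℕ) (h : m = p + q) :
    (m.choose p : ℚ) * tcoef m =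
      (∑ n ∈ (Finset.range (m + 2)).filter (fun n => p + 1 ≤ n),
        (n.choose p : ℚ) * tcoef n * tcoef (m + 1 - n)) +
      (∑ r ∈ (Finset.range (m + 2)).filter (fun r => q + 1 ≤ r),
        (r.choose q : ℚ) * tcoef (m + 1 - r) * tcoef r) := by
  have key := bernG_functional_equation_coeff p q
  rw [Finset.Nat.sum_antidiagonal_succ_eq_add_sum_filter
      (fun n j => (n.choose q : ℚ) * tcoef j * tcoef n) (h.trans (add_comm p q)),
    Finset.Nat.sum_antidiagonal_succ_eq_add_sum_filter
      (fun n j => (n.choose p : ℚ) * tcoef n * tcoef j) h] at key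
  subst h
  rw [← Nat.choose_symm_add] at key
  simp only [Nat.choose_self, Nat.cast_one, one_mul] at key
  linarith
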